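/- arXiv:1107.1171 — 3 statements merged into one kernel-verified Lean document; each statement's English description precedes it below -/
import Mathlib

section
/- Let H be a numerical semigroup, n ∈ H nonzero, k a field, and R' = k[H]/(t^n) where k[H] ⊆ k[t] is the semigroup algebra. The set of degrees of nonzero homogeneous elements of the socle of R' (annihilator of the graded maximal ideal) equals {λ : λ - n ∈ M⁻ \ H}, i.e. the degrees λ that correspond via λ ↦ λ - n to elements of M⁻ \ H. In particular, the k-dimension of the socle of R' equals the cardinality of M⁻ \ H. -/
def inH (H : AddSubmonoid ℕ) (z : ℤ) : Prop := 0 ≤ z ∧ z.toNat ∈ H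

def Mminus (H : AddSubmonoid ℕ) : Set ℤ :=
  {z : ℤ | ∀ m : ℕ, m ∈ H → m ≠ 0 → inH H (z + m)}

namespace SocleAux

open AddMonoidAlgebra

variable {k : Type*} [Field k] {H : AddSubmonoid ℕ} {n : ℕ}

/-- degrees lying in `n + H` -/
def sig (H : AddSubmonoid ℕ) (n : ℕ) : Set H := {h : H | inH H ((h : ℤ) - n)}

lemma mem_sig_iff {h : H} : h ∈ sig H n ↔ ∃ s ∈ H, (h : ℕ) = n + s := by
  constructor
  · rintro ⟨h0, hmem⟩
    exact ⟨((h : ℤ) - n).toNat, hmem, by omega⟩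
  · rintro ⟨s, hs, hsum⟩
    refine ⟨by omega, ?_⟩
    convert hs using 2
    omega

set_option maxHeartbeats 1000000 in
lemma mem_ideal_iff (hn : n ∈ H) (f : AddMonoidAlgebra k H) :
    f ∈ Ideal.span {AddMonoidAlgebra.single (⟨n, hn⟩ : H) (1 : k)} ↔
      ↑f.coeff.support ⊆ sig H n := by
  classical
  constructor
  · intro hf h hh
    rw [Ideal.mem_span_singleton'] at hf
    obtain ⟨g, rfl⟩ := hf
    have := AddMonoidAlgebra.support_coeff_mul_subset g (single (⟨n, hn⟩ : H) (1 : k)) hh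
    rw [Finset.mem_add] at this
    obtain ⟨a, ha, b, hb, rfl⟩ := this
    have hb' : b = (⟨n, hn⟩ : H) := Finset.mem_singleton.mp
      (by rw [AddMonoidAlgebra.coeff_single] at hb; exact Finsupp.support_single_subset hb)
    subst hb'
    exact mem_sig_iff.mpr ⟨(a : ℕ), a.2, by push_cast; ring⟩
  · intro hs
    have hmem : f ∈ AddMonoidAlgebra.supported k k (sig H n) := AddMonoidAlgebra.mem_supported.mpr hs
    rw [AddMonoidAlgebra.supported_eq_span_single] at hmem
    have hle : Submodule.span k ((fun i => AddMonoidAlgebra.single i (1 : k)) '' sig H n) ≤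
        (Ideal.span {AddMonoidAlgebra.single (⟨n, hn⟩ : H) (1 : k)}).restrictScalars k := by
      rw [Submodule.span_le]
      rintro x ⟨h, hh, rfl⟩
      obtain ⟨s, hs', hsum⟩ := mem_sig_iff.mp hh
      have heq : (AddMonoidAlgebra.single h (1 : k) : AddMonoidAlgebra k H)
          = AddMonoidAlgebra.single (⟨n, hn⟩ : H) (1 : k) *
            AddMonoidAlgebra.single (⟨s, hs'⟩ : H) (1 : k) := by
        rw [AddMonoidAlgebra.single_mul_single, one_mul]
        congr 1
        exact Subtype.ext hsum
      rw [SetLike.mem_coe, Submodule.restrictScalars_mem]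
      beta_reduce
      have hm : AddMonoidAlgebra.single (⟨n, hn⟩ : H) (1 : k) *
          AddMonoidAlgebra.single (⟨s, hs'⟩ : H) (1 : k) ∈
          Ideal.span {AddMonoidAlgebra.single (⟨n, hn⟩ : H) (1 : k)} :=
        Ideal.mul_mem_right _ _ (Ideal.subset_span rfl)
      exact heq ▸ hm
    exact hle hmem

lemma mk_single_eq_zero_iff (hn : n ∈ H) (h : H) :
    Ideal.Quotient.mk (Ideal.span {AddMonoidAlgebra.single (⟨n, hn⟩ : H) (1 : k)})
      (AddMonoidAlgebra.single h (1 : k)) = 0 ↔ h ∈ sig H n := by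
  rw [Ideal.Quotient.eq_zero_iff_mem, mem_ideal_iff hn, AddMonoidAlgebra.coeff_single,
    Finsupp.support_single_ne_zero _ (one_ne_zero)]
  simp

lemma mul_single_mem_iff (hn : n ∈ H) (f : AddMonoidAlgebra k H) (m : H) :
    f * AddMonoidAlgebra.single m (1 : k) ∈
        Ideal.span {AddMonoidAlgebra.single (⟨n, hn⟩ : H) (1 : k)} ↔
      ∀ h ∈ f.coeff.support, h + m ∈ sig H n := by
  classical
  rw [mem_ideal_iff hn, AddMonoidAlgebra.support_coeff_mul_single_eq_image f (by simp)
      (fun _ _ hab => add_right_cancel hab),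
    Finset.coe_image, Set.image_subset_iff]
  constructor
  · intro hs h hh
    exact hs hh
  · intro hs h hh
    exact hs h hh


/-- socle degrees -/
def lam (H : AddSubmonoid ℕ) (n : ℕ) : Set H :=
  {h : H | (∀ m : H, (m : ℕ) ≠ 0 → h + m ∈ sig H n) ∧ h ∉ sig H n}

lemma mem_lam_iff {h : H} :
    h ∈ lam H n ↔ ((h : ℤ) - n) ∈ Mminus H ∧ ¬ inH H ((h : ℤ) - n) := by
  unfold lam Mminus sig
  simp only [Set.mem_setOf_eq]
  constructor
  · rintro ⟨h1, h2⟩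
    refine ⟨fun m hm hm0 => ?_, h2⟩
    have h3 := h1 ⟨m, hm⟩ hm0
    have he : ((↑(h + (⟨m, hm⟩ : H)) : ℕ) : ℤ) - (n : ℤ) = ((h : ℕ) : ℤ) - n + (m : ℤ) := by
      push_cast
      ring
    exact he ▸ h3
  · rintro ⟨h1, h2⟩
    refine ⟨fun m hm0 => ?_, h2⟩
    have h3 := h1 m m.2 hm0
    have he : ((↑(h + m) : ℕ) : ℤ) - (n : ℤ) = ((h : ℕ) : ℤ) - n + ((m : ℕ) : ℤ) := by
      push_cast
      ring
    rw [he]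
    exact h3

lemma sub_inj : Function.Injective (fun h : H => (h : ℤ) - n) := by
  intro a b hab
  simp only at hab
  have : ((a : ℕ) : ℤ) = ((b : ℕ) : ℤ) := by omega
  exact Subtype.ext (by exact_mod_cast this)

lemma target_finite (hfin : {m : ℕ | m ∉ H}.Finite) (hn : n ∈ H) (hn0 : n ≠ 0) :
    {z : ℤ | z ∈ Mminus H ∧ ¬ inH H z}.Finite := by
  apply Set.Finite.subset ((Set.finite_Icc (-(n : ℤ)) 0).union (hfin.image (fun m : ℕ => (m : ℤ))))
  rintro z ⟨hz1, hz2⟩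
  have hzn : inH H (z + n) := hz1 n hn hn0
  by_cases h0 : 0 ≤ z
  · right
    refine ⟨z.toNat, fun hmem => hz2 ⟨h0, hmem⟩, ?_⟩
    show (z.toNat : ℤ) = z
    omega
  · left
    simp only [Set.mem_Icc]
    have := hzn.1
    omega

lemma lam_eq_preimage :
    lam H n = (fun h : H => (h : ℤ) - n) ⁻¹' {z : ℤ | z ∈ Mminus H ∧ ¬ inH H z} := by
  ext h
  exact mem_lam_iff

lemma lam_finite (hfin : {m : ℕ | m ∉ H}.Finite) (hn : n ∈ H) (hn0 : n ≠ 0) :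
    (lam H n).Finite := by
  rw [lam_eq_preimage]
  exact Set.Finite.preimage (Set.injOn_of_injective sub_inj) (target_finite hfin hn hn0)

lemma image_lam (hn : n ∈ H) (hn0 : n ≠ 0) :
    (fun h : H => (h : ℤ) - n) '' (lam H n) = {z : ℤ | z ∈ Mminus H ∧ ¬ inH H z} := by
  ext z
  constructor
  · rintro ⟨h, hh, rfl⟩
    exact mem_lam_iff.mp hh
  · rintro ⟨hz1, hz2⟩
    have hzn : inH H (z + n) := hz1 n hn hn0
    have h0 := hzn.1
    refine ⟨⟨(z + n).toNat, hzn.2⟩, ?_, ?_⟩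
    · rw [mem_lam_iff]
      have he : ((⟨(z + n).toNat, hzn.2⟩ : H) : ℤ) - (n : ℤ) = z := by
        show (((z + n).toNat : ℕ) : ℤ) - (n : ℤ) = z
        omega
      rw [he]
      exact ⟨hz1, hz2⟩
    · show (((z + n).toNat : ℕ) : ℤ) - (n : ℤ) = z
      omega

lemma ncard_eq (hn : n ∈ H) (hn0 : n ≠ 0) :
    (lam H n).ncard = {z : ℤ | z ∈ Mminus H ∧ ¬ inH H z}.ncard := by
  rw [← image_lam hn hn0, Set.ncard_image_of_injOn (Set.injOn_of_injective sub_inj)]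

end SocleAux

open SocleAux

set_option maxHeartbeats 2000000 in
/-- In R' = k[H]/(t^n), the set of degrees of nonzero homogeneous socle elements
equals {λ : λ - n ∈ M⁻ \ H}; in particular dim_k Soc(R') = |M⁻ \ H|. -/
theorem socle_degrees_and_dim
    (k : Type*) [Field k]
    (H : AddSubmonoid ℕ) (hfin : {m : ℕ | m ∉ H}.Finite)
    (n : ℕ) (hn : n ∈ H) (hn0 : n ≠ 0) :
    {l : ℕ | ∃ hl : l ∈ H,
        Ideal.Quotient.mk (Ideal.span {AddMonoidAlgebra.single (⟨n, hn⟩ : H) (1 : k)})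
          (AddMonoidAlgebra.single (⟨l, hl⟩ : H) (1 : k)) ≠ 0 ∧
        ∀ m : H, (m : ℕ) ≠ 0 →
          Ideal.Quotient.mk (Ideal.span {AddMonoidAlgebra.single (⟨n, hn⟩ : H) (1 : k)})
              (AddMonoidAlgebra.single (⟨l, hl⟩ : H) (1 : k)) *
            Ideal.Quotient.mk (Ideal.span {AddMonoidAlgebra.single (⟨n, hn⟩ : H) (1 : k)})
              (AddMonoidAlgebra.single m (1 : k)) = 0} =
      {l : ℕ | ((l : ℤ) - n) ∈ Mminus H ∧ ¬ inH H ((l : ℤ) - n)} ∧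
    ∃ S : Submodule k (AddMonoidAlgebra k H ⧸
        Ideal.span {AddMonoidAlgebra.single (⟨n, hn⟩ : H) (1 : k)}),
      (↑S : Set _) = {x | ∀ m : H, (m : ℕ) ≠ 0 →
          x * Ideal.Quotient.mk (Ideal.span {AddMonoidAlgebra.single (⟨n, hn⟩ : H) (1 : k)})
            (AddMonoidAlgebra.single m (1 : k)) = 0} ∧
      Module.finrank k S = {z : ℤ | z ∈ Mminus H ∧ ¬ inH H z}.ncard := by
  classical
  set I : Ideal (AddMonoidAlgebra k H) :=
    Ideal.span {AddMonoidAlgebra.single (⟨n, hn⟩ : H) (1 : k)} with hI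
  constructor
  · ext l
    simp only [Set.mem_setOf_eq]
    constructor
    · rintro ⟨hl, hne, hmul⟩
      have hlam : (⟨l, hl⟩ : H) ∈ lam H n := by
        constructor
        · intro m hm
          have h2 := hmul m hm
          rw [← map_mul, AddMonoidAlgebra.single_mul_single, one_mul] at h2
          exact (mk_single_eq_zero_iff hn _).mp h2
        · intro hsig
          exact hne ((mk_single_eq_zero_iff hn _).mpr hsig)
      exact mem_lam_iff.mp hlam
    · rintro ⟨hz1, hz2⟩
      have hl : l ∈ H := by
        have h2 := hz1 n hn hn0
        have he : (l : ℤ) - n + n = (l : ℤ) := by ring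
        rw [he] at h2
        simpa using h2.2
      have hlam : (⟨l, hl⟩ : H) ∈ lam H n := mem_lam_iff.mpr ⟨hz1, hz2⟩
      refine ⟨hl, ?_, ?_⟩
      · intro h0
        exact hlam.2 ((mk_single_eq_zero_iff hn _).mp h0)
      · intro m hm
        rw [← map_mul, AddMonoidAlgebra.single_mul_single, one_mul]
        exact (mk_single_eq_zero_iff hn _).mpr (hlam.1 m hm)
  · haveI : Fintype (lam H n) := (lam_finite hfin hn hn0).fintype
    let v : lam H n → (AddMonoidAlgebra k H ⧸ I) :=
      fun h => Ideal.Quotient.mk I (AddMonoidAlgebra.single (h : H) (1 : k))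
    refine ⟨Submodule.span k (Set.range v), ?_, ?_⟩
    · have hgen : ∀ x ∈ Set.range v, ∀ m : H, (m : ℕ) ≠ 0 →
          x * Ideal.Quotient.mk I (AddMonoidAlgebra.single m (1 : k)) = 0 := by
        rintro x ⟨h, rfl⟩ m hm
        show Ideal.Quotient.mk I _ * _ = 0
        rw [← map_mul, AddMonoidAlgebra.single_mul_single, one_mul]
        exact (mk_single_eq_zero_iff hn _).mpr (h.2.1 m hm)
      apply Set.Subset.antisymm
      · intro x hx
        simp only [Set.mem_setOf_eq]
        intro m hm
        -- use that the socle set is a submodule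
        refine Submodule.span_induction ?_ ?_ ?_ ?_ hx
        · intro y hy
          exact hgen y hy m hm
        · rw [zero_mul]
        · intro a b _ _ ha hb
          rw [add_mul, ha, hb, add_zero]
        · intro c a _ ha
          rw [smul_mul_assoc, ha, smul_zero]
      · intro x hx
        simp only [Set.mem_setOf_eq] at hx
        obtain ⟨f, rfl⟩ := Ideal.Quotient.mk_surjective x
        set p : H → Prop := fun h => h ∈ sig H n with hp
        set f' := AddMonoidAlgebra.ofCoeff (f.coeff.filter (fun h => ¬ p h)) with hf'
        have hzero : Ideal.Quotient.mk I (AddMonoidAlgebra.ofCoeff (f.coeff.filter p)) = 0 := by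
          rw [Ideal.Quotient.eq_zero_iff_mem]
          apply (mem_ideal_iff hn _).mpr
          intro h hh
          rw [Finset.mem_coe, AddMonoidAlgebra.coeff_ofCoeff, Finsupp.support_filter,
            Finset.mem_filter] at hh
          exact hh.2
        have hQf : Ideal.Quotient.mk I f = Ideal.Quotient.mk I f' := by
          conv_lhs => rw [← AddMonoidAlgebra.ofCoeff_coeff f, ← Finsupp.filter_pos_add_filter_neg f.coeff p,
            AddMonoidAlgebra.ofCoeff_add]
          rw [map_add, hzero, zero_add]
        have hsupp : ↑f'.coeff.support ⊆ lam H n := by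
          intro h hh
          have hh' : h ∈ f'.coeff.support := hh
          rw [hf', AddMonoidAlgebra.coeff_ofCoeff, Finsupp.support_filter, Finset.mem_filter] at hh'
          refine ⟨fun m hm => ?_, hh'.2⟩
          have h2 := hx m hm
          rw [hQf, ← map_mul] at h2
          exact (mul_single_mem_iff hn f' m).mp (Ideal.Quotient.eq_zero_iff_mem.mp h2) h hh
        have hf'mem : f' ∈ AddMonoidAlgebra.supported k k (lam H n) :=
          AddMonoidAlgebra.mem_supported.mpr hsupp
        rw [AddMonoidAlgebra.supported_eq_span_single] at hf'mem
        have happ := Submodule.apply_mem_span_image_of_mem_span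
          (f := (Ideal.Quotient.mkₐ k I).toLinearMap) hf'mem
        have himage : (Ideal.Quotient.mkₐ k I).toLinearMap ''
            ((fun i => AddMonoidAlgebra.single i (1 : k)) '' lam H n) ⊆ Set.range v := by
          rintro y ⟨z, ⟨h, hh, rfl⟩, rfl⟩
          exact ⟨⟨h, hh⟩, rfl⟩
        rw [hQf]
        exact Submodule.span_mono himage happ
    · have hu : LinearIndependent k
          (fun h : lam H n => (AddMonoidAlgebra.single (h : H) (1 : k) : AddMonoidAlgebra k H)) := by
        have hb := (AddMonoidAlgebra.basis H k).linearIndependent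
        have hc := hb.comp ((↑) : lam H n → H) Subtype.val_injective
        exact hc
      have hker : LinearMap.ker (Ideal.Quotient.mkₐ k I).toLinearMap ≤
          AddMonoidAlgebra.supported k k (sig H n) := by
        intro x hx
        rw [LinearMap.mem_ker] at hx
        have hxi : x ∈ I := by
          rwa [← Ideal.Quotient.eq_zero_iff_mem (I := I)]
        exact AddMonoidAlgebra.mem_supported.mpr ((mem_ideal_iff hn x).mp hxi)
      have hsp : Submodule.span k (Set.range
            (fun h : lam H n => (AddMonoidAlgebra.single (h : H) (1 : k) : AddMonoidAlgebra k H))) ≤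
          AddMonoidAlgebra.supported k k (lam H n) := by
        rw [Submodule.span_le]
        rintro y ⟨h, rfl⟩
        exact AddMonoidAlgebra.mem_supported.mpr
          ((Finsupp.mem_supported k _).mp (Finsupp.single_mem_supported k (1 : k) h.2))
      have hdisj : Disjoint (Submodule.span k (Set.range
            (fun h : lam H n => (AddMonoidAlgebra.single (h : H) (1 : k) : AddMonoidAlgebra k H))))
          (LinearMap.ker (Ideal.Quotient.mkₐ k I).toLinearMap) := by
        refine Disjoint.mono hsp hker ?_
        have hds : Disjoint (lam H n) (sig H n) := by
          rw [Set.disjoint_left]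
          intro h hh hsig
          exact hh.2 hsig
        rw [Submodule.disjoint_def]
        intro x hx1 hx2
        exact AddMonoidAlgebra.coeff_eq_zero.mp
          ((Submodule.disjoint_def.mp (Finsupp.disjoint_supported_supported (M := k) (R := k) hds))
            x.coeff ((Finsupp.mem_supported k _).mpr (AddMonoidAlgebra.mem_supported.mp hx1))
            ((Finsupp.mem_supported k _).mpr (AddMonoidAlgebra.mem_supported.mp hx2)))
      have hli : LinearIndependent k v := hu.map hdisj
      rw [finrank_span_eq_card hli, ← ncard_eq hn hn0, ← Nat.card_coe_set_eq,
        Nat.card_eq_fintype_card]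
end

section
/- Let H be a numerical semigroup with H ≠ ℕ, n ∈ H nonzero, k a field, and R' = k[H]/(t^n). Let b be a homogeneous socle element of R' of maximal degree. Then the Frobenius number f of H satisfies f = deg(b) - n, and the maximal degree deg(b) is independent of the choice of homogeneous basis of the socle. -/
/-!
A monomial `t^l` vanishes in `k[H]/(t^n)` exactly when `l - n ∈ H`, so a nonzero socle monomial
`t^l` has `l - n ∉ H`, whence `l - n ≤ f`. Conversely `t^(f + n)` is a nonzero socle monomial:
`f ∉ H`, while `f + m ∈ H` for every nonzero `m ∈ H`, since `f + m > f`.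
-/

namespace AddMonoidAlgebra

variable {k A : Type*}

theorem single_one_mem_span_single_one_iff [Semiring k] [Nontrivial k] [AddMonoid A] {a b : A} :
    single a (1 : k) ∈ Ideal.span {single b 1} ↔ ∃ c, a = c + b := by
  classical
  rw [← of'_apply, ← Set.image_singleton, mem_ideal_span_of'_image]
  simp [coeff_single]

theorem mk_single_one_eq_zero_iff [CommRing k] [Nontrivial k] [AddCommMonoid A] {a b : A} :
    Ideal.Quotient.mk (Ideal.span {single b (1 : k)}) (single a 1) = 0 ↔ ∃ c, a = c + b :=
  Ideal.Quotient.eq_zero_iff_mem.trans single_one_mem_span_single_one_iff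

end AddMonoidAlgebra

namespace AddSubmonoid

variable {H : AddSubmonoid ℕ}

theorem exists_eq_add_iff {x y : H} : (∃ c, x = c + y) ↔ (y : ℕ) ≤ x ∧ (x : ℕ) - y ∈ H := by
  constructor
  · rintro ⟨c, rfl⟩
    simp
  · rintro ⟨hle, hsub⟩
    exact ⟨⟨x - y, hsub⟩, Subtype.ext (by simp only [coe_add]; omega)⟩

theorem mem_of_frobenius_lt {f m : ℕ} (hf : IsGreatest {m : ℕ | m ∉ H} f) (h : f < m) : m ∈ H :=
  by_contra fun hm ↦ h.not_ge (hf.2 hm)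

def socleDegrees (k : Type*) [CommRing k] (H : AddSubmonoid ℕ) (n : ℕ) (hn : n ∈ H) : Set ℕ :=
  {l : ℕ | ∃ hl : l ∈ H,
    Ideal.Quotient.mk (Ideal.span {AddMonoidAlgebra.single (⟨n, hn⟩ : H) (1 : k)})
      (AddMonoidAlgebra.single (⟨l, hl⟩ : H) (1 : k)) ≠ 0 ∧
    ∀ m : H, (m : ℕ) ≠ 0 →
      Ideal.Quotient.mk (Ideal.span {AddMonoidAlgebra.single (⟨n, hn⟩ : H) (1 : k)})
          (AddMonoidAlgebra.single (⟨l, hl⟩ : H) (1 : k)) *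
        Ideal.Quotient.mk (Ideal.span {AddMonoidAlgebra.single (⟨n, hn⟩ : H) (1 : k)})
          (AddMonoidAlgebra.single m (1 : k)) = 0}

open AddMonoidAlgebra in
theorem isGreatest_socleDegrees (k : Type*) [CommRing k] [Nontrivial k] {n f : ℕ} (hn : n ∈ H)
    (hn0 : n ≠ 0) (hf : IsGreatest {m : ℕ | m ∉ H} f) :
    IsGreatest (socleDegrees k H n hn) (f + n) := by
  have hfn : f + n ∈ H := mem_of_frobenius_lt hf (by omega)
  refine ⟨⟨hfn, ?_, fun m hm ↦ ?_⟩, fun l ⟨hl, hl0, _⟩ ↦ ?_⟩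
  · rw [Ne, mk_single_one_eq_zero_iff, exists_eq_add_iff]
    simpa using hf.1
  · rw [← map_mul, single_mul_single, one_mul, mk_single_one_eq_zero_iff, exists_eq_add_iff]
    refine ⟨by simp only [coe_add]; omega, mem_of_frobenius_lt hf ?_⟩
    simp only [coe_add]
    omega
  · rw [Ne, mk_single_one_eq_zero_iff, exists_eq_add_iff] at hl0
    by_contra! hlt
    exact hl0 ⟨by dsimp only; omega, mem_of_frobenius_lt hf (by dsimp only; omega)⟩

end AddSubmonoid

theorem frobenius_eq_socle_degree_sub_general
    (k : Type*) [Field k]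
    (H : AddSubmonoid ℕ)
    (n : ℕ) (hn : n ∈ H) (hn0 : n ≠ 0)
    (f d : ℕ)
    (hf : IsGreatest {m : ℕ | m ∉ H} f)
    (hd : IsGreatest {l : ℕ | ∃ hl : l ∈ H,
        Ideal.Quotient.mk (Ideal.span {AddMonoidAlgebra.single (⟨n, hn⟩ : H) (1 : k)})
          (AddMonoidAlgebra.single (⟨l, hl⟩ : H) (1 : k)) ≠ 0 ∧
        ∀ m : H, (m : ℕ) ≠ 0 →
          Ideal.Quotient.mk (Ideal.span {AddMonoidAlgebra.single (⟨n, hn⟩ : H) (1 : k)})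
              (AddMonoidAlgebra.single (⟨l, hl⟩ : H) (1 : k)) *
            Ideal.Quotient.mk (Ideal.span {AddMonoidAlgebra.single (⟨n, hn⟩ : H) (1 : k)})
              (AddMonoidAlgebra.single m (1 : k)) = 0} d) :
    n ≤ d ∧ f = d - n := by
  have hd_eq : d = f + n := hd.unique (AddSubmonoid.isGreatest_socleDegrees k hn hn0 hf)
  omega

/-- In R' = k[H]/(t^n), if d is the maximal degree of a nonzero homogeneous
socle element (the degree of b, which is independent of the chosen basis of
the socle since it is characterized as a maximum), then the Frobenius number
of H is f = d - n. -/
theorem frobenius_eq_socle_degree_sub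
    (k : Type*) [Field k]
    (H : AddSubmonoid ℕ) (hfin : {m : ℕ | m ∉ H}.Finite)
    (hne : (H : Set ℕ) ≠ Set.univ)
    (n : ℕ) (hn : n ∈ H) (hn0 : n ≠ 0)
    (f d : ℕ)
    (hf : IsGreatest {m : ℕ | m ∉ H} f)
    (hd : IsGreatest {l : ℕ | ∃ hl : l ∈ H,
        Ideal.Quotient.mk (Ideal.span {AddMonoidAlgebra.single (⟨n, hn⟩ : H) (1 : k)})
          (AddMonoidAlgebra.single (⟨l, hl⟩ : H) (1 : k)) ≠ 0 ∧
        ∀ m : H, (m : ℕ) ≠ 0 →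
          Ideal.Quotient.mk (Ideal.span {AddMonoidAlgebra.single (⟨n, hn⟩ : H) (1 : k)})
              (AddMonoidAlgebra.single (⟨l, hl⟩ : H) (1 : k)) *
            Ideal.Quotient.mk (Ideal.span {AddMonoidAlgebra.single (⟨n, hn⟩ : H) (1 : k)})
              (AddMonoidAlgebra.single m (1 : k)) = 0} d) :
    n ≤ d ∧ f = d - n :=
  frobenius_eq_socle_degree_sub_general k H n hn hn0 f d hf hd
end

section
/- The presentation ideal of the monomial curve (t⁶, t⁸, t⁹) is generated by X₁³ - X₃² and X₂³ - X₁X₃²; that is, the kernel of the map k[X₁,X₂,X₃] → k[t] with X₁↦t⁶, X₂↦t⁸, X₃↦t⁹ equals (X₁³ - X₃², X₂³ - X₁X₃²). -/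
/-!
Modulo the two relations every monomial `X₀ᵃ X₁ᵇ X₂ᶜ` can be rewritten, using `X₁³ = X₀X₂²` and
`X₀³ = X₂²`, to one with `a, b < 3`. These reduced monomials have pairwise distinct weights
`6a + 8b + 9c`, so they map to distinct powers of `t`; hence a reduced polynomial in the kernel
is zero, and every element of the kernel is congruent to such a polynomial.
-/

open MvPolynomial

section WeightedMonomialMap

variable {σ R : Type*} [CommSemiring R] (w : σ → ℕ)

theorem aeval_X_pow_monomial (d : σ →₀ ℕ) (c : R) :
    aeval (fun i => (Polynomial.X : Polynomial R) ^ w i) (monomial d c) =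
      Polynomial.C c * Polynomial.X ^ Finsupp.weight w d := by
  simp only [aeval_monomial, Finsupp.weight_apply, Finsupp.prod, Finsupp.sum, ← pow_mul,
    Finset.prod_pow_eq_pow_sum, smul_eq_mul, mul_comm (w _)]
  rfl

theorem eq_zero_of_aeval_X_pow_eq_zero {p : MvPolynomial σ R}
    (hinj : Set.InjOn (Finsupp.weight w) (p.support : Set (σ →₀ ℕ)))
    (hp : aeval (fun i => (Polynomial.X : Polynomial R) ^ w i) p = 0) : p = 0 := by
  ext d
  by_cases hd : d ∈ p.support
  · have hcoeff := congrArg (Polynomial.coeff · (Finsupp.weight w d)) hp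
    rw [p.as_sum, map_sum] at hcoeff
    simp only [aeval_X_pow_monomial, Polynomial.finsetSum_coeff, Polynomial.coeff_C_mul_X_pow,
      Polynomial.coeff_zero] at hcoeff
    rwa [Finset.sum_eq_single_of_mem d hd fun e he hne => if_neg fun h => hne (hinj he hd h.symm),
      if_pos rfl] at hcoeff
  · exact notMem_support_iff.mp hd

end WeightedMonomialMap

theorem pow_eq_pow_mod_mul_pow_div {M : Type*} [Monoid M] {x y : M} {n : ℕ} (h : x ^ n = y)
    (a : ℕ) : x ^ a = x ^ (a % n) * y ^ (a / n) := by
  rw [← h, ← pow_mul, ← pow_add, Nat.mod_add_div]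

namespace MonomialCurve689

variable (k : Type*) [CommRing k]

noncomputable def curveIdeal : Ideal (MvPolynomial (Fin 3) k) :=
  Ideal.span {X 0 ^ 3 - X 2 ^ 2, X 1 ^ 3 - X 0 * X 2 ^ 2}

def IsReduced (e : Fin 3 →₀ ℕ) : Prop := e 0 < 3 ∧ e 1 < 3

/-- The exponent obtained by rewriting `X₁ ^ 3` as `X₀ X₂ ^ 2`, then `X₀ ^ 3` as `X₂ ^ 2`. -/
noncomputable def reduceExp (d : Fin 3 →₀ ℕ) : Fin 3 →₀ ℕ :=
  let a := d 0 + d 1 / 3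
  Finsupp.equivFunOnFinite.symm ![a % 3, d 1 % 3, d 2 + 2 * (d 1 / 3) + 2 * (a / 3)]

theorem reduceExp_isReduced (d : Fin 3 →₀ ℕ) : IsReduced (reduceExp d) := by
  simp [IsReduced, reduceExp, Nat.mod_lt]

theorem weight_injOn_isReduced : Set.InjOn (Finsupp.weight ![6, 8, 9]) {e | IsReduced e} := by
  intro d hd e he h
  simp only [Finsupp.weight_eq_sum, Fin.sum_univ_three, smul_eq_mul] at h
  simp only [Set.mem_ofPred_eq, IsReduced] at hd he
  ext i
  fin_cases i <;> simp at h ⊢ <;> omega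

theorem curveIdeal_le_ker :
    curveIdeal k ≤
      RingHom.ker (aeval fun i : Fin 3 => (Polynomial.X : Polynomial k) ^ (![6, 8, 9] i)) := by
  rw [curveIdeal, Ideal.span_le]
  rintro p (rfl | rfl) <;> simp [← pow_mul, ← pow_add]

variable {k}

theorem monomial_eq_X_pow (d : Fin 3 →₀ ℕ) (c : k) :
    monomial d c = C c * (X 0 ^ d 0 * X 1 ^ d 1 * X 2 ^ d 2) := by
  rw [monomial_eq, Finsupp.prod_fintype _ _ fun _ => pow_zero _, Fin.prod_univ_three]

theorem monomial_sub_monomial_reduceExp_mem (d : Fin 3 →₀ ℕ) (c : k) :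
    monomial d c - monomial (reduceExp d) c ∈ curveIdeal k := by
  rw [monomial_eq_X_pow, monomial_eq_X_pow, ← mul_sub]
  refine Ideal.mul_mem_left _ _ ?_
  rw [← Ideal.Quotient.eq]
  set x := fun i => Ideal.Quotient.mk (curveIdeal k) (X i)
  have h0 : x 0 ^ 3 = x 2 ^ 2 := by
    simp only [x, ← map_pow, Ideal.Quotient.eq]
    exact Ideal.subset_span (by simp)
  have h1 : x 1 ^ 3 = x 0 * x 2 ^ 2 := by
    simp only [x, ← map_pow, ← map_mul, Ideal.Quotient.eq]
    exact Ideal.subset_span (by simp)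
  simp only [map_mul, map_pow, reduceExp, Finsupp.coe_equivFunOnFinite_symm, Matrix.cons_val]
  set a := d 0 + d 1 / 3
  calc x 0 ^ d 0 * x 1 ^ d 1 * x 2 ^ d 2
      = x 0 ^ d 0 * (x 1 ^ (d 1 % 3) * (x 0 * x 2 ^ 2) ^ (d 1 / 3)) * x 2 ^ d 2 := by
        rw [← pow_eq_pow_mod_mul_pow_div h1]
    _ = x 0 ^ a * x 1 ^ (d 1 % 3) * x 2 ^ (d 2 + 2 * (d 1 / 3)) := by ring
    _ = x 0 ^ (a % 3) * (x 2 ^ 2) ^ (a / 3) * x 1 ^ (d 1 % 3) * x 2 ^ (d 2 + 2 * (d 1 / 3)) := by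
        rw [← pow_eq_pow_mod_mul_pow_div h0]
    _ = _ := by ring

theorem exists_isReduced_sub_mem (p : MvPolynomial (Fin 3) k) :
    ∃ q : MvPolynomial (Fin 3) k, p - q ∈ curveIdeal k ∧ ∀ e ∈ q.support, IsReduced e := by
  induction p using MvPolynomial.induction_on' with
  | monomial d c =>
    refine ⟨monomial (reduceExp d) c, monomial_sub_monomial_reduceExp_mem d c, fun e he => ?_⟩
    rw [Finset.mem_singleton.mp (support_monomial_subset he)]
    exact reduceExp_isReduced d
  | add p q hp hq =>
    obtain ⟨p', hpp', hp'⟩ := hp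
    obtain ⟨q', hqq', hq'⟩ := hq
    refine ⟨p' + q', by rw [add_sub_add_comm]; exact add_mem hpp' hqq', fun e he => ?_⟩
    exact (Finset.mem_union.mp (support_add he)).elim (hp' e) (hq' e)

end MonomialCurve689

/-- The presentation ideal of the monomial curve (t⁶,t⁸,t⁹):
ker(k[X₁,X₂,X₃] → k[t], X₁↦t⁶, X₂↦t⁸, X₃↦t⁹) = (X₁³ - X₃², X₂³ - X₁X₃²). -/
theorem presentation_ideal_689
    (k : Type*) [Field k] :
    RingHom.ker (aeval (fun i : Fin 3 =>
        (Polynomial.X : Polynomial k) ^ (![6, 8, 9] i)) :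
        MvPolynomial (Fin 3) k →ₐ[k] Polynomial k) =
      Ideal.span ({X 0 ^ 3 - X 2 ^ 2, X 1 ^ 3 - X 0 * X 2 ^ 2} :
        Set (MvPolynomial (Fin 3) k)) := by
  refine le_antisymm (fun p hp => ?_) (MonomialCurve689.curveIdeal_le_ker k)
  obtain ⟨q, hpq, hq⟩ := MonomialCurve689.exists_isReduced_sub_mem p
  have hq0 : q = 0 := by
    refine eq_zero_of_aeval_X_pow_eq_zero _ (MonomialCurve689.weight_injOn_isReduced.mono hq) ?_
    rw [← (RingHom.sub_mem_ker_iff _).mp (MonomialCurve689.curveIdeal_le_ker k hpq)]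
    exact hp
  rwa [hq0, sub_zero] at hpq
end
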